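/- Let G be a Polish group acting topometrically with ample generics on a Polish topometric space X. Let A, B ⊆ X with A non-meagre and B non-meagre in every non-empty open set, let x̄ ∈ X^n be generic, V an open neighbourhood of 1_G, and ε > 0. Then there exist y₀ ∈ A, y₁ ∈ B and h ∈ V such that (x̄,y₀) and (x̄,y₁) are generic and ∂(h·(x̄,y₀),(x̄,y₁)) < ε. -/

import Mathlib

/-- The supremum metric on tuples induced by a metric `D`. -/
noncomputable def supMet {X : Type*} (D : X → X → ℝ) {n : ℕ} (x y : Fin n → X) : ℝ :=
  ⨆ i : Fin n, D (x i) (y i)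

/-- The orbit of a tuple under the diagonal action associated to `a : G → X → X`. -/
def orbitTup {G X : Type*} (a : G → X → X) {n : ℕ} (x : Fin n → X) : Set (Fin n → X) :=
  {y | ∃ g : G, ∀ i, a g (x i) = y i}

/-- The open `ε`-enlargement of a set of tuples with respect to the sup metric of `D`. -/
def encl {X : Type*} (D : X → X → ℝ) {n : ℕ} (ε : ℝ) (A : Set (Fin n → X)) :
    Set (Fin n → X) :=
  {x | ∃ y ∈ A, supMet D x y < ε}

/-- The closure of a set of tuples in the sup metric of `D`. -/
def metCl {X : Type*} (D : X → X → ℝ) {n : ℕ} (A : Set (Fin n → X)) :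
    Set (Fin n → X) :=
  {x | ∀ ε > (0 : ℝ), ∃ y ∈ A, supMet D x y < ε}

/-- The set of generic `n`-tuples: those whose orbit has comeagre `D`-closure. -/
def generics {G X : Type*} [TopologicalSpace X] (D : X → X → ℝ) (a : G → X → X)
    (n : ℕ) : Set (Fin n → X) :=
  {x | metCl D (orbitTup a x) ∈ residual (Fin n → X)}

/-!
Fix `δ = ε / 5` and a tuple `z` whose `δ`-neighbourhood of the orbit is comeagre. By the
Kuratowski–Ulam theorem and the invariance of the generics under the action, for comeagre many
`y` the tuple `(x, y)` is generic and `2δ`-close to a translate of `z` by some `v ∈ G`. Cover `G`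
by countably many open sets `W i` with `w * v⁻¹ ∈ V` for `v, w ∈ W i`. The set `T i` of those `y`
admitting such a `v` in `W i` is the projection of a closed set (the distance is only lower
semicontinuous), hence analytic, hence has the Baire property. Some `T i` meets `A` non-meagrely,
so it is comeagre in a non-empty open set, where it also meets `B`. Witnesses `v₀, v₁ ∈ W i` for
`y₀ ∈ A` and `y₁ ∈ B` give `h = v₁ * v₀⁻¹`.
-/

open Set Filter Topology TopologicalSpace MeasureTheory PiNat

section Meagre

variable {α : Type*} [TopologicalSpace α]

theorem not_isMeagre_of_subset_union {s t m : Set α} (hs : ¬ IsMeagre s) (hst : s ⊆ t ∪ m)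
    (hm : IsMeagre m) : ¬ IsMeagre t :=
  fun ht => hs ((ht.union hm).mono hst)

theorem isMeagre_diff_of_residualEq {s t : Set α} (h : s =ᵇ t) : IsMeagre (s \ t) :=
  mem_of_superset (eventuallyEq_set.1 h) fun _ hx hst => hst.2 (hx.1 hst.1)

theorem IsClosed.baireMeasurableSet {s : Set α} (hs : IsClosed s) : BaireMeasurableSet s :=
  hs.isOpen_compl.baireMeasurableSet.of_compl

theorem BaireMeasurableSet.of_isMeagre_diff {s t : Set α} (ht : BaireMeasurableSet t)
    (hst : IsMeagre (s \ t)) (hts : IsMeagre (t \ s)) : BaireMeasurableSet s :=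
  ht.congr <| eventuallyEq_set.2 <| mem_of_superset (hts.union hst) fun x hx => by
    simp only [mem_compl_iff, mem_union, Set.mem_sdiff, not_or, not_and, not_not] at hx
    exact ⟨hx.1, hx.2⟩

/-- The Baire envelope of `s`. -/
def nonMeagrePoints (s : Set α) : Set α :=
  {x | ∀ U : Set α, IsOpen U → x ∈ U → ¬ IsMeagre (s ∩ U)}

theorem isClosed_nonMeagrePoints (s : Set α) : IsClosed (nonMeagrePoints s) := by
  refine isOpen_compl_iff.1 (isOpen_iff_forall_mem_open.2 fun x hx => ?_)
  simp only [nonMeagrePoints, mem_compl_iff, mem_ofPred_eq, not_forall, not_not] at hx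
  obtain ⟨U, hU, hxU, hsU⟩ := hx
  exact ⟨U, fun y hyU hy => hy U hU hyU hsU, hU, hxU⟩

theorem nonMeagrePoints_subset_closure (s : Set α) : nonMeagrePoints s ⊆ closure s :=
  fun _ hx => mem_closure_iff.2 fun U hU hxU => by
    simpa only [inter_comm] using nonempty_of_not_isMeagre (hx U hU hxU)

theorem nonMeagrePoints_subset_of_isMeagre_diff {s t : Set α} (h : IsMeagre (s \ t)) :
    nonMeagrePoints s ⊆ nonMeagrePoints t :=
  fun _ hx U hU hxU => not_isMeagre_of_subset_union (hx U hU hxU) (fun y hy => by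
    by_cases hyt : y ∈ t
    exacts [Or.inl ⟨hyt, hy.2⟩, Or.inr ⟨hy.1, hyt⟩]) h

theorem isMeagre_diff_nonMeagrePoints [SecondCountableTopology α] (s : Set α) :
    IsMeagre (s \ nonMeagrePoints s) := by
  have hc : {O ∈ countableBasis α | IsMeagre (s ∩ O)}.Countable :=
    (countable_countableBasis α).mono fun _ hO => hO.1
  refine (isMeagre_biUnion hc (f := (s ∩ ·)) fun O hO => hO.2).mono ?_
  rintro y ⟨hys, hy⟩
  simp only [nonMeagrePoints, mem_ofPred_eq, not_forall, not_not] at hy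
  obtain ⟨U, hU, hyU, hsU⟩ := hy
  obtain ⟨O, hO, hyO, hOU⟩ := (isBasis_countableBasis α).exists_subset_of_mem_open hyU hU
  exact mem_iUnion₂.2 ⟨O, ⟨hO, hsU.mono (inter_subset_inter_right s hOU)⟩, hys, hyO⟩

theorem BaireMeasurableSet.isMeagre_nonMeagrePoints_diff {s : Set α}
    (hs : BaireMeasurableSet s) : IsMeagre (nonMeagrePoints s \ s) := by
  obtain ⟨U, hU, hsU⟩ := hs.residualEq_isOpen
  have hsub : nonMeagrePoints s ⊆ closure U :=
    (nonMeagrePoints_subset_of_isMeagre_diff (isMeagre_diff_of_residualEq hsU)).trans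
      (nonMeagrePoints_subset_closure U)
  refine ((isMeagre_diff_of_residualEq (closure_residualEq hU.isLocallyClosed)).union
    (isMeagre_diff_of_residualEq hsU.symm)).mono fun y ⟨hy, hys⟩ => ?_
  by_cases hyU : y ∈ U
  exacts [Or.inr ⟨hyU, hys⟩, Or.inl ⟨hsub hy, hyU⟩]

theorem isMeagre_nonMeagrePoints_diff_iUnion [SecondCountableTopology α] {s : Set α}
    {t : ℕ → Set α} (h : s ⊆ ⋃ i, t i) :
    IsMeagre (nonMeagrePoints s \ ⋃ i, nonMeagrePoints (t i)) := by
  have hU : BaireMeasurableSet (⋃ i, nonMeagrePoints (t i)) :=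
    .iUnion fun i => (isClosed_nonMeagrePoints _).baireMeasurableSet
  have hs : IsMeagre (s \ ⋃ i, nonMeagrePoints (t i)) := by
    refine (isMeagre_iUnion fun i => isMeagre_diff_nonMeagrePoints (t i)).mono ?_
    rintro y ⟨hys, hyt⟩
    obtain ⟨i, hi⟩ := mem_iUnion.1 (h hys)
    exact mem_iUnion.2 ⟨i, hi, fun hy => hyt (mem_iUnion.2 ⟨i, hy⟩)⟩
  exact hU.isMeagre_nonMeagrePoints_diff.mono
    (sdiff_subset_sdiff_left (nonMeagrePoints_subset_of_isMeagre_diff hs))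

end Meagre

section Analytic

theorem exists_forall_res_of_forall_exists_cons {p : List ℕ → Prop} (h₀ : p [])
    (hstep : ∀ t, p t → ∃ i, p (i :: t)) : ∃ σ : ℕ → ℕ, ∀ n, p (res σ n) := by
  choose! next hnext using hstep
  let path : ℕ → List ℕ := fun n => Nat.rec [] (fun _ t => next t :: t) n
  have hpath : ∀ n, p (path n) := fun n => Nat.rec h₀ (fun _ ih => hnext _ ih) n
  have hres : ∀ n, res (fun k => next (path k)) n = path n := by
    intro n
    induction n with
    | zero => rfl
    | succ n ih => rw [res_succ, ih]
  exact ⟨fun k => next (path k), fun n => hres n ▸ hpath n⟩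

variable {α : Type*} [TopologicalSpace α]

theorem eq_of_forall_mem_closure_image_cylinder [T3Space α] {f : (ℕ → ℕ) → α}
    (hf : Continuous f) {σ : ℕ → ℕ} {y : α} (hy : ∀ n, y ∈ closure (f '' cylinder σ n)) :
    y = f σ := by
  by_contra hne
  obtain ⟨C, ⟨hC, hCc⟩, hCy⟩ :=
    (closed_nhds_basis (f σ)).mem_iff.1 (compl_singleton_mem_nhds (Ne.symm hne))
  obtain ⟨_, ⟨τ, n, rfl⟩, hστ, hτ⟩ :=
    (isTopologicalBasis_cylinders fun _ => ℕ).mem_nhds_iff.1 (hf.continuousAt hC)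
  rw [← mem_cylinder_iff_eq.1 hστ] at hτ
  exact hCy (closure_minimal (image_subset_iff.2 hτ) hCc (hy n)) rfl

/-- Let `A t` be the image of the sequences extending `t` (`res` lists the first entries in
reverse order, so the children of `t` are the `i :: t`). The envelopes `F t` of the `A t` differ
from the union of the envelopes of the children of `t` by meagre sets, and a point of `F []`
outside all these meagre sets lies on an infinite branch, hence in the analytic set. -/
theorem AnalyticSet.baireMeasurableSet [SecondCountableTopology α] [T3Space α] {s : Set α}
    (hs : AnalyticSet s) : BaireMeasurableSet s := by
  rw [AnalyticSet] at hs
  obtain rfl | ⟨f, hf, rfl⟩ := hs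
  · exact IsMeagre.empty.baireMeasurableSet
  set A : List ℕ → Set α := fun t => f '' {σ | res σ t.length = t}
  set F : List ℕ → Set α := fun t => nonMeagrePoints (A t)
  have hA : ∀ t, A t ⊆ ⋃ i, A (i :: t) := fun t => by
    simp only [A, ← image_iUnion, List.length_cons]
    refine image_mono fun σ hσ => mem_iUnion.2 ⟨σ t.length, ?_⟩
    simpa [res_succ] using hσ
  have hAres : ∀ σ n, A (res σ n) = f '' cylinder σ n := fun σ n => by
    simp only [A, res_length, cylinder_eq_res]
  have hbad : ∀ t, IsMeagre (F t \ ⋃ i, F (i :: t)) := fun t =>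
    isMeagre_nonMeagrePoints_diff_iUnion (hA t)
  have hnil : A [] = range f := by simp [A, image_univ]
  refine (isClosed_nonMeagrePoints (A [])).baireMeasurableSet.of_isMeagre_diff
    (hnil ▸ isMeagre_diff_nonMeagrePoints (A [])) ?_
  refine (isMeagre_iUnion hbad).mono fun y ⟨hyF, hyf⟩ => ?_
  by_contra hgood
  simp only [mem_iUnion, Set.mem_sdiff, not_exists, not_and, not_forall, not_not] at hgood
  obtain ⟨σ, hσ⟩ := exists_forall_res_of_forall_exists_cons (p := fun t => y ∈ F t) hyF hgood
  refine hyf ⟨σ, (eq_of_forall_mem_closure_image_cylinder hf fun n => ?_).symm⟩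
  exact hAres σ n ▸ nonMeagrePoints_subset_closure _ (hσ n)

theorem baireMeasurableSet_setOf_exists_mem_of_isClosed {G X : Type*} [TopologicalSpace G]
    [PolishSpace G] [TopologicalSpace X] [PolishSpace X] {S : Set (G × X)} (hS : IsClosed S)
    {W : Set G} (hW : IsOpen W) : BaireMeasurableSet {y | ∃ v ∈ W, (v, y) ∈ S} := by
  have : PolishSpace S := hS.polishSpace
  have hO : IsOpen {p : S | p.1.1 ∈ W} := hW.preimage (continuous_fst.comp continuous_subtype_val)
  refine AnalyticSet.baireMeasurableSet ?_
  convert hO.analyticSet_image (continuous_snd.comp continuous_subtype_val) using 1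
  ext y
  simp

end Analytic

def snocHomeomorph (X : Type*) [TopologicalSpace X] (n : ℕ) :
    (Fin n → X) × X ≃ₜ (Fin (n + 1) → X) where
  toFun p := Fin.snoc p.1 p.2
  invFun w := (Fin.init w, w (Fin.last n))
  left_inv p := by simp
  right_inv w := Fin.snoc_init_self w
  continuous_toFun := continuous_fst.finSnoc (A := fun _ => X) continuous_snd
  continuous_invFun := (continuous_pi fun _ => continuous_apply _).prodMk (continuous_apply _)

section KuratowskiUlam

variable {X Y : Type*} [TopologicalSpace X] [TopologicalSpace Y] [SecondCountableTopology Y]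

theorem eventually_residual_dense_prodMk_preimage {U : Set (X × Y)} (hU : IsOpen U)
    (hd : Dense U) : ∀ᶠ x in residual X, Dense (Prod.mk x ⁻¹' U) := by
  have hO : ∀ O ∈ countableBasis Y, Prod.fst '' (U ∩ univ ×ˢ O) ∈ residual X := by
    intro O hO
    have hOo := isOpen_of_mem_countableBasis hO
    refine residual_of_dense_open (isOpenMap_fst _ (hU.inter (isOpen_univ.prod hOo))) ?_
    refine dense_iff_inter_open.2 fun W hW hWne => ?_
    obtain ⟨p, ⟨hpW, hpO⟩, hpU⟩ := hd.inter_open_nonempty (W ×ˢ O) (hW.prod hOo)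
      (hWne.prod (nonempty_of_mem_countableBasis hO))
    exact ⟨p.1, hpW, p, ⟨hpU, mem_univ _, hpO⟩, rfl⟩
  filter_upwards [(eventually_countable_ball (countable_countableBasis Y)).2 hO] with x hx
  refine (isBasis_countableBasis Y).dense_iff.2 fun O hO _ => ?_
  obtain ⟨p, ⟨hpU, -, hpO⟩, rfl⟩ := hx O hO
  exact ⟨p.2, hpO, hpU⟩

/-- One half of the Kuratowski–Ulam theorem. -/
theorem eventually_residual_prodMk_preimage_mem_residual {Ω : Set (X × Y)}
    (hΩ : Ω ∈ residual (X × Y)) : ∀ᶠ x in residual X, Prod.mk x ⁻¹' Ω ∈ residual Y := by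
  obtain ⟨S, hSo, hSd, hSc, hSΩ⟩ := mem_residual_iff.1 hΩ
  filter_upwards [(eventually_countable_ball hSc).2 fun U hU =>
    eventually_residual_dense_prodMk_preimage (hSo U hU) (hSd U hU)] with x hx
  refine mem_of_superset ((countable_bInter_mem hSc).2 fun U hU =>
    residual_of_dense_open ((hSo U hU).preimage (Continuous.prodMk_right x)) (hx U hU)) ?_
  exact fun y hy => hSΩ fun U hU => mem_iInter₂.1 hy U hU


theorem eventually_residual_snoc_mem_residual [SecondCountableTopology X] {n : ℕ}
    {Ω : Set (Fin (n + 1) → X)} (hΩ : Ω ∈ residual (Fin (n + 1) → X)) :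
    ∀ᶠ x in residual (Fin n → X), {y : X | Fin.snoc x y ∈ Ω} ∈ residual X := by
  rw [← (snocHomeomorph X n).residual_map_eq] at hΩ
  exact eventually_residual_prodMk_preimage_mem_residual hΩ

end KuratowskiUlam

section SupMet

variable {X : Type*} {D : X → X → ℝ}

/-- Not a `PseudoMetricSpace` instance: the topology of `X` is not the one induced by `D`. -/
structure IsPseudoMetricFn (D : X → X → ℝ) : Prop where
  dist_self : ∀ x, D x x = 0
  comm : ∀ x y, D x y = D y x
  triangle : ∀ x y z, D x z ≤ D x y + D y z

theorem le_supMet {m : ℕ} (x y : Fin m → X) (i : Fin m) : D (x i) (y i) ≤ supMet D x y :=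
  le_ciSup (finite_range fun j => D (x j) (y j)).bddAbove i

theorem supMet_le_iff {m : ℕ} {x y : Fin m → X} {r : ℝ} (hr : 0 ≤ r) :
    supMet D x y ≤ r ↔ ∀ i, D (x i) (y i) ≤ r :=
  ⟨fun h i => (le_supMet x y i).trans h, fun h => Real.iSup_le h hr⟩

theorem supMet_lt {m : ℕ} {x y : Fin m → X} {r : ℝ} (hr : 0 < r)
    (h : ∀ i, D (x i) (y i) < r) : supMet D x y < r := by
  rcases isEmpty_or_nonempty (Fin m) with hm | hm
  · simpa [supMet] using hr
  · obtain ⟨i, hi⟩ := Finite.exists_max fun i => D (x i) (y i)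
    exact (ciSup_le hi).trans_lt (h i)

theorem supMet_snoc_lt {m : ℕ} {x x' : Fin m → X} {y y' : X} {r : ℝ} (hr : 0 < r)
    (hx : supMet D x x' < r) (hy : D y y' < r) :
    supMet D (Fin.snoc x y : Fin (m + 1) → X) (Fin.snoc x' y') < r :=
  supMet_lt hr fun i => Fin.lastCases (by simpa using hy)
    (fun j => by simpa using (le_supMet x x' j).trans_lt hx) i

theorem metCl_mono {m : ℕ} {S T : Set (Fin m → X)} (h : S ⊆ T) :
    metCl D S ⊆ metCl D T := fun _ hx ε hε =>
  let ⟨y, hy, hxy⟩ := hx ε hε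
  ⟨y, h hy, hxy⟩

theorem isClosed_setOf_supMet_le {Z : Type*} [TopologicalSpace Z] [TopologicalSpace X]
    (hD : ∀ r : ℝ, IsClosed {p : X × X | D p.1 p.2 ≤ r}) {m : ℕ}
    {f g : Z → Fin m → X} (hf : Continuous f) (hg : Continuous g) {r : ℝ} (hr : 0 ≤ r) :
    IsClosed {p | supMet D (f p) (g p) ≤ r} := by
  simp only [supMet_le_iff hr, ofPred_forall]
  exact isClosed_iInter fun i =>
    (hD r).preimage (((continuous_apply i).comp hf).prodMk ((continuous_apply i).comp hg))

namespace IsPseudoMetricFn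

theorem supMet_self (hD : IsPseudoMetricFn D) {m : ℕ} (x : Fin m → X) : supMet D x x = 0 := by
  simp [supMet, hD.dist_self]

theorem supMet_comm (hD : IsPseudoMetricFn D) {m : ℕ} (x y : Fin m → X) :
    supMet D x y = supMet D y x := by
  simp only [supMet, hD.comm]

theorem supMet_triangle (hD : IsPseudoMetricFn D) {m : ℕ} (x y z : Fin m → X) :
    supMet D x z ≤ supMet D x y + supMet D y z := by
  rcases isEmpty_or_nonempty (Fin m) with hm | hm
  · simp [supMet]
  · exact ciSup_le fun i =>
      (hD.triangle _ _ _).trans (add_le_add (le_supMet x y i) (le_supMet y z i))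

theorem mem_metCl (hD : IsPseudoMetricFn D) {m : ℕ} {S : Set (Fin m → X)} {x : Fin m → X}
    (hx : x ∈ S) : x ∈ metCl D S :=
  fun _ hε => ⟨x, hx, hD.supMet_self x ▸ hε⟩

theorem metCl_metCl (hD : IsPseudoMetricFn D) {m : ℕ} (S : Set (Fin m → X)) :
    metCl D (metCl D S) = metCl D S := by
  refine Subset.antisymm (fun x hx ε hε => ?_) fun x hx => hD.mem_metCl hx
  obtain ⟨y, hy, hxy⟩ := hx (ε / 2) (half_pos hε)
  obtain ⟨z, hz, hyz⟩ := hy (ε / 2) (half_pos hε)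
  exact ⟨z, hz, by linarith [hD.supMet_triangle x y z]⟩

theorem metCl_encl_subset (hD : IsPseudoMetricFn D) {m : ℕ} {S : Set (Fin m → X)} {δ : ℝ}
    (hδ : 0 < δ) : metCl D (encl D δ S) ⊆ encl D (2 * δ) S := fun x hx => by
  obtain ⟨y, ⟨z, hz, hyz⟩, hxy⟩ := hx δ hδ
  exact ⟨z, hz, by linarith [hD.supMet_triangle x y z]⟩

end IsPseudoMetricFn

end SupMet

structure IsIsometricAction {G X : Type*} [Group G] (D : X → X → ℝ) (a : G → X → X) : Prop where
  one_act : ∀ x, a 1 x = x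
  mul_act : ∀ g h x, a (g * h) x = a g (a h x)
  dist_act : ∀ g x y, D (a g x) (a g y) = D x y

namespace IsIsometricAction

variable {G X : Type*} [Group G] {D : X → X → ℝ} {a : G → X → X} {m : ℕ}

theorem act_inv_act (ha : IsIsometricAction D a) (g : G) (x : X) : a g⁻¹ (a g x) = x := by
  rw [← ha.mul_act, inv_mul_cancel, ha.one_act]

theorem act_act_inv (ha : IsIsometricAction D a) (g : G) (x : X) : a g (a g⁻¹ x) = x := by
  simpa using ha.act_inv_act g⁻¹ x

theorem supMet_act (ha : IsIsometricAction D a) (g : G) (x y : Fin m → X) :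
    supMet D (fun i => a g (x i)) (fun i => a g (y i)) = supMet D x y := by
  simp only [supMet, ha.dist_act]

theorem supMet_act_mul_inv (ha : IsIsometricAction D a) (g h : G) (x y : Fin m → X) :
    supMet D (fun i => a (h * g⁻¹) (x i)) (fun i => a h (y i)) =
      supMet D x (fun i => a g (y i)) := by
  have : (fun i => a h (y i)) = fun i => a (h * g⁻¹) (a g (y i)) :=
    funext fun i => by rw [← ha.mul_act, inv_mul_cancel_right]
  rw [this, ha.supMet_act]

theorem act_mem_orbitTup (ha : IsIsometricAction D a) (g : G) {x y : Fin m → X}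
    (hy : y ∈ orbitTup a x) : (fun i => a g (y i)) ∈ orbitTup a x :=
  let ⟨h, hh⟩ := hy
  ⟨g * h, fun i => by rw [ha.mul_act, hh i]⟩

theorem act_mem_metCl_orbitTup (ha : IsIsometricAction D a) (g : G) {x y : Fin m → X}
    (hy : y ∈ metCl D (orbitTup a x)) : (fun i => a g (y i)) ∈ metCl D (orbitTup a x) :=
  fun ε hε =>
    let ⟨u, hu, hyu⟩ := hy ε hε
    ⟨_, ha.act_mem_orbitTup g hu, (ha.supMet_act g y u).symm ▸ hyu⟩

theorem act_mem_encl_orbitTup (ha : IsIsometricAction D a) (g : G) {x y : Fin m → X} {δ : ℝ}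
    (hy : y ∈ encl D δ (orbitTup a x)) : (fun i => a g (y i)) ∈ encl D δ (orbitTup a x) :=
  let ⟨u, hu, hyu⟩ := hy
  ⟨_, ha.act_mem_orbitTup g hu, (ha.supMet_act g y u).symm ▸ hyu⟩

theorem orbitTup_act (ha : IsIsometricAction D a) (g : G) (x : Fin m → X) :
    orbitTup a (fun i => a g (x i)) = orbitTup a x := by
  ext y
  constructor
  · rintro ⟨h, hh⟩
    exact ⟨h * g, fun i => by rw [ha.mul_act, hh i]⟩
  · rintro ⟨h, hh⟩
    exact ⟨h * g⁻¹, fun i => by rw [ha.mul_act, ha.act_inv_act, hh i]⟩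

theorem metCl_orbitTup_subset (ha : IsIsometricAction D a) (hD : IsPseudoMetricFn D)
    {x y : Fin m → X} (hy : y ∈ metCl D (orbitTup a x)) :
    metCl D (orbitTup a y) ⊆ metCl D (orbitTup a x) :=
  (metCl_mono (by rintro _ ⟨g, hg⟩; exact funext hg ▸ ha.act_mem_metCl_orbitTup g hy)).trans
    (hD.metCl_metCl _).subset

theorem metCl_orbitTup_eq (ha : IsIsometricAction D a) (hD : IsPseudoMetricFn D)
    {x y : Fin m → X} (hy : y ∈ metCl D (orbitTup a x)) :
    metCl D (orbitTup a y) = metCl D (orbitTup a x) := by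
  refine (ha.metCl_orbitTup_subset hD hy).antisymm (ha.metCl_orbitTup_subset hD fun ε hε => ?_)
  obtain ⟨_, ⟨g, hg⟩, hyu⟩ := hy ε hε
  refine ⟨fun i => a g⁻¹ (y i), ⟨g⁻¹, fun i => rfl⟩, ?_⟩
  rw [← ha.supMet_act g, hD.supMet_comm]
  simp only [ha.act_act_inv]
  rwa [funext hg]

theorem mem_encl_orbitTup_of_mem_encl (ha : IsIsometricAction D a) (hD : IsPseudoMetricFn D)
    {x y z : Fin m → X} {δ : ℝ} (hx : x ∈ encl D δ (orbitTup a z))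
    (hy : y ∈ encl D δ (orbitTup a z)) : y ∈ encl D (2 * δ) (orbitTup a x) := by
  obtain ⟨_, ⟨g, hg⟩, hxu⟩ := hx
  obtain ⟨v, ⟨h, hh⟩, hyv⟩ := hy
  refine ⟨fun i => a (h * g⁻¹) (x i), ⟨_, fun i => rfl⟩, ?_⟩
  have := ha.supMet_act_mul_inv g h x z
  rw [funext hg, funext hh] at this
  linarith [hD.supMet_triangle y v (fun i => a (h * g⁻¹) (x i)),
    hD.supMet_comm v (fun i => a (h * g⁻¹) (x i))]

section Topological

variable [TopologicalSpace X]

theorem act_mem_generics (ha : IsIsometricAction D a) (g : G)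
    {x : Fin m → X} (hx : x ∈ generics D a m) : (fun i => a g (x i)) ∈ generics D a m := by
  rwa [generics, mem_ofPred_eq, ha.orbitTup_act]

theorem preimage_mem_residual [TopologicalSpace G] (ha : IsIsometricAction D a)
    (hcont : Continuous fun p : G × X => a p.1 p.2) (g : G) {s : Set X} (hs : s ∈ residual X) :
    a g ⁻¹' s ∈ residual X := by
  let e : X ≃ₜ X :=
    { toFun := a g
      invFun := a g⁻¹
      left_inv := ha.act_inv_act g
      right_inv := ha.act_act_inv g
      continuous_toFun := hcont.comp (continuous_const.prodMk continuous_id)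
      continuous_invFun := hcont.comp (continuous_const.prodMk continuous_id) }
  rw [← e.residual_map_eq] at hs
  exact hs

theorem generics_eq_metCl [BaireSpace (Fin m → X)] (ha : IsIsometricAction D a)
    (hD : IsPseudoMetricFn D) {x : Fin m → X} (hx : x ∈ generics D a m) :
    generics D a m = metCl D (orbitTup a x) := by
  have : Nonempty (Fin m → X) := ⟨x⟩
  ext y
  refine ⟨fun hy => ?_, fun hy => ?_⟩
  · obtain ⟨u, huy, hux⟩ := (dense_of_mem_residual (inter_mem hy hx)).nonempty
    rw [← ha.metCl_orbitTup_eq hD hux, ha.metCl_orbitTup_eq hD huy]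
    exact hD.mem_metCl ⟨1, fun i => ha.one_act _⟩
  · change metCl D (orbitTup a y) ∈ residual _
    rwa [ha.metCl_orbitTup_eq hD hy]

theorem generics_mem_residual [BaireSpace (Fin m → X)] (ha : IsIsometricAction D a)
    (hD : IsPseudoMetricFn D) {x : Fin m → X} (hx : x ∈ generics D a m) :
    generics D a m ∈ residual (Fin m → X) := by
  rw [ha.generics_eq_metCl hD hx]
  exact hx

theorem metCl_generics_subset [BaireSpace (Fin m → X)] (ha : IsIsometricAction D a)
    (hD : IsPseudoMetricFn D) : metCl D (generics D a m) ⊆ generics D a m := fun y hy => by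
  obtain ⟨x, hx, -⟩ := hy 1 one_pos
  rw [ha.generics_eq_metCl hD hx] at hy ⊢
  exact (hD.metCl_metCl _).subset hy

theorem generics_mem_residual_of_ample [BaireSpace (Fin m → X)] (ha : IsIsometricAction D a)
    (hD : IsPseudoMetricFn D)
    (hAG : ∀ ε > (0 : ℝ), ∃ z : Fin m → X, encl D ε (orbitTup a z) ∈ residual (Fin m → X)) :
    generics D a m ∈ residual (Fin m → X) := by
  choose z hz using fun k : ℕ => hAG (1 / (k + 1)) Nat.one_div_pos_of_nat
  have hW : (⋂ k : ℕ, encl D (1 / (k + 1)) (orbitTup a (z k))) ∈ residual (Fin m → X) :=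
    countable_iInter_mem.2 hz
  have : Nonempty (Fin m → X) := ⟨z 0⟩
  obtain ⟨x, hx⟩ := (dense_of_mem_residual hW).nonempty
  refine ha.generics_mem_residual hD (x := x) (mem_of_superset hW fun y hy ε hε => ?_)
  obtain ⟨k, hk⟩ := exists_nat_one_div_lt (half_pos hε)
  obtain ⟨u, hu, hyu⟩ :=
    ha.mem_encl_orbitTup_of_mem_encl hD (mem_iInter.1 hx k) (mem_iInter.1 hy k)
  exact ⟨u, hu, by linarith⟩

/-- Pick a generic `x'` over which `Θ` has a comeagre slice (Kuratowski–Ulam). Since `x` is a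
limit of translates `gₖ • x'`, a point `y` common to the translated slices makes `(x, y)` a limit
of the points `(gₖ • x', y)` of `Θ`. -/
theorem eventually_residual_snoc_mem_metCl [TopologicalSpace G] [SecondCountableTopology X]
    [BaireSpace (Fin m → X)] (ha : IsIsometricAction D a) (hD : IsPseudoMetricFn D)
    (hcont : Continuous fun p : G × X => a p.1 p.2) {Θ : Set (Fin (m + 1) → X)}
    (hΘ : Θ ∈ residual (Fin (m + 1) → X)) (hΘa : ∀ g, ∀ w ∈ Θ, (fun i => a g (w i)) ∈ Θ)
    {x : Fin m → X} (hx : x ∈ generics D a m) :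
    ∀ᶠ y in residual X, (Fin.snoc x y : Fin (m + 1) → X) ∈ metCl D Θ := by
  have : Nonempty (Fin m → X) := ⟨x⟩
  obtain ⟨x', hx'g, hx'Θ⟩ := (dense_of_mem_residual <|
    inter_mem (ha.generics_mem_residual hD hx) (eventually_residual_snoc_mem_residual hΘ)).nonempty
  have hxx' : x ∈ metCl D (orbitTup a x') := ha.generics_eq_metCl hD hx'g ▸ hx
  choose u hu hxu using fun k : ℕ => hxx' (1 / (k + 1)) Nat.one_div_pos_of_nat
  choose g hg using hu
  filter_upwards [eventually_countable_forall.2 fun k =>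
    ha.preimage_mem_residual hcont (g k)⁻¹ hx'Θ] with y hy ε hε
  obtain ⟨k, hk⟩ := exists_nat_one_div_lt hε
  refine ⟨_, hΘa (g k) _ (hy k), ?_⟩
  have : (fun i => a (g k) ((Fin.snoc x' (a (g k)⁻¹ y) : Fin (m + 1) → X) i)) =
      Fin.snoc (u k) y := by
    funext i
    refine Fin.lastCases ?_ (fun j => ?_) i <;> simp [ha.act_act_inv, ← hg k]
  rw [this]
  exact supMet_snoc_lt hε ((hxu k).trans hk) (hD.dist_self y ▸ hε)


theorem eventually_residual_snoc_mem_generics_inter_encl [TopologicalSpace G]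
    [SecondCountableTopology X] [BaireSpace (Fin m → X)] [BaireSpace (Fin (m + 1) → X)]
    (ha : IsIsometricAction D a) (hD : IsPseudoMetricFn D)
    (hcont : Continuous fun p : G × X => a p.1 p.2)
    (hAG : ∀ ε > (0 : ℝ), ∃ z : Fin (m + 1) → X,
      encl D ε (orbitTup a z) ∈ residual (Fin (m + 1) → X))
    {z : Fin (m + 1) → X} {δ : ℝ} (hδ : 0 < δ)
    (hz : encl D δ (orbitTup a z) ∈ residual (Fin (m + 1) → X))
    {x : Fin m → X} (hx : x ∈ generics D a m) :
    ∀ᶠ y in residual X, (Fin.snoc x y : Fin (m + 1) → X) ∈ generics D a (m + 1) ∧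
      (Fin.snoc x y : Fin (m + 1) → X) ∈ encl D (2 * δ) (orbitTup a z) := by
  filter_upwards [ha.eventually_residual_snoc_mem_metCl hD hcont
    (inter_mem (ha.generics_mem_residual_of_ample hD hAG) hz)
    (fun g w hw => ⟨ha.act_mem_generics g hw.1, ha.act_mem_encl_orbitTup g hw.2⟩) hx] with y hy
  exact ⟨ha.metCl_generics_subset hD (metCl_mono inter_subset_left hy),
    hD.metCl_encl_subset hδ (metCl_mono inter_subset_right hy)⟩

end Topological

end IsIsometricAction

theorem exists_isOpen_cover_mul_inv_mem {G : Type*} [Group G] [TopologicalSpace G]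
    [IsTopologicalGroup G] [SeparableSpace G] {V : Set G} (hV : V ∈ 𝓝 (1 : G)) :
    ∃ W : ℕ → Set G, (∀ i, IsOpen (W i)) ∧ (⋃ i, W i) = univ ∧
      ∀ i, ∀ v ∈ W i, ∀ w ∈ W i, w * v⁻¹ ∈ V := by
  obtain ⟨U, hU, hU1, hUV⟩ := exists_open_nhds_one_mul_subset hV
  obtain ⟨d, hd⟩ := exists_dense_seq G
  have hUU : IsOpen (U ∩ U⁻¹) := hU.inter hU.inv
  refine ⟨fun i => {g | g * (d i)⁻¹ ∈ U ∩ U⁻¹}, fun i => hUU.preimage (continuous_mul_const _),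
    eq_univ_of_forall fun g => mem_iUnion.2 ?_, ?_⟩
  · exact hd.exists_mem_open (hUU.preimage (continuous_const.mul continuous_inv))
      ⟨g, by simp [hU1]⟩
  · rintro i v ⟨-, hv⟩ w ⟨hw, -⟩
    simpa [mul_assoc] using hUV (mul_mem_mul hw (mem_inv.1 hv))

theorem exists_mem_inter_mem_of_subset_iUnion {α : Type*} [TopologicalSpace α] [BaireSpace α]
    {Φ : Set α} (hΦ : Φ ∈ residual α) {T : ℕ → Set α} (hT : ∀ i, BaireMeasurableSet (T i))
    (hΦT : Φ ⊆ ⋃ i, T i) {A B : Set α} (hA : ¬ IsMeagre A)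
    (hB : ∀ U, IsOpen U → U.Nonempty → ¬ IsMeagre (B ∩ U)) :
    ∃ i, (A ∩ Φ ∩ T i).Nonempty ∧ (B ∩ Φ ∩ T i).Nonempty := by
  have hΦc : IsMeagre Φᶜ := by rwa [IsMeagre, compl_compl]
  have hAΦ : ¬ IsMeagre (A ∩ Φ) := not_isMeagre_of_subset_union hA (fun y hy => by
    by_cases hyΦ : y ∈ Φ
    exacts [Or.inl ⟨hy, hyΦ⟩, Or.inr hyΦ]) hΦc
  obtain ⟨i, hi⟩ : ∃ i, ¬ IsMeagre (A ∩ Φ ∩ T i) := by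
    by_contra! h
    refine hAΦ ((isMeagre_iUnion h).mono fun y hy => ?_)
    obtain ⟨i, hi⟩ := mem_iUnion.1 (hΦT hy.2)
    exact mem_iUnion.2 ⟨i, hy, hi⟩
  obtain ⟨U, hU, hTU⟩ := (hT i).residualEq_isOpen
  have hUne : U.Nonempty := by
    by_contra! hU0
    refine hi ((isMeagre_diff_of_residualEq hTU).mono ?_)
    rw [hU0, sdiff_empty]
    exact inter_subset_right
  refine ⟨i, nonempty_of_not_isMeagre hi, nonempty_of_not_isMeagre <| not_isMeagre_of_subset_union
    (hB U hU hUne) ?_ (hΦc.union (isMeagre_diff_of_residualEq hTU.symm))⟩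
  rintro y ⟨hyB, hyU⟩
  by_cases hyΦ : y ∈ Φ
  · by_cases hyT : y ∈ T i
    · exact Or.inl ⟨⟨hyB, hyΦ⟩, hyT⟩
    · exact Or.inr (Or.inr ⟨hyU, hyT⟩)
  · exact Or.inr (Or.inl hyΦ)


theorem exists_mul_inv_mem_of_isClosed {G X : Type*} [Group G] [TopologicalSpace G]
    [IsTopologicalGroup G] [PolishSpace G] [TopologicalSpace X] [PolishSpace X]
    {R : Set (G × X)} (hR : IsClosed R) {Φ : Set X} (hΦ : Φ ∈ residual X)
    (hΦR : ∀ y ∈ Φ, ∃ g, (g, y) ∈ R) {A B : Set X} (hA : ¬ IsMeagre A)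
    (hB : ∀ U, IsOpen U → U.Nonempty → ¬ IsMeagre (B ∩ U)) {V : Set G} (hV : V ∈ 𝓝 (1 : G)) :
    ∃ y₀ ∈ A ∩ Φ, ∃ y₁ ∈ B ∩ Φ, ∃ v₀ v₁ : G, v₁ * v₀⁻¹ ∈ V ∧ (v₀, y₀) ∈ R ∧ (v₁, y₁) ∈ R := by
  obtain ⟨W, hWo, hWG, hWV⟩ := exists_isOpen_cover_mul_inv_mem hV
  have hΦW : Φ ⊆ ⋃ i, {y | ∃ v ∈ W i, (v, y) ∈ R} := fun y hy => by
    obtain ⟨g, hg⟩ := hΦR y hy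
    obtain ⟨i, hi⟩ := mem_iUnion.1 (hWG ▸ mem_univ g)
    exact mem_iUnion.2 ⟨i, g, hi, hg⟩
  obtain ⟨i, ⟨y₀, hy₀, v₀, hv₀, hv₀R⟩, ⟨y₁, hy₁, v₁, hv₁, hv₁R⟩⟩ :=
    exists_mem_inter_mem_of_subset_iUnion hΦ
      (fun i => baireMeasurableSet_setOf_exists_mem_of_isClosed hR (hWo i)) hΦW hA hB
  exact ⟨y₀, hy₀, y₁, hy₁, v₀, v₁, hWV i v₀ hv₀ v₁ hv₁, hv₀R, hv₁R⟩

theorem stmt_7_general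
    {G X : Type*} [Group G] [TopologicalSpace G] [IsTopologicalGroup G] [PolishSpace G]
    [TopologicalSpace X] [PolishSpace X]
    (D : X → X → ℝ)
    (hD_eq : ∀ x y : X, D x y = 0 ↔ x = y)
    (hD_symm : ∀ x y : X, D x y = D y x)
    (hD_tri : ∀ x y z : X, D x z ≤ D x y + D y z)
    (hD_lsc : ∀ r : ℝ, IsClosed {p : X × X | D p.1 p.2 ≤ r})
    (a : G → X → X)
    (ha_one : ∀ x : X, a 1 x = x)
    (ha_mul : ∀ g h : G, ∀ x : X, a (g * h) x = a g (a h x))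
    (ha_cont : Continuous fun p : G × X => a p.1 p.2)
    (ha_iso : ∀ g : G, ∀ x y : X, D (a g x) (a g y) = D x y)
    (hAG : ∀ n : ℕ, ∀ ε > (0 : ℝ), ∃ x : Fin n → X,
      encl D ε (orbitTup a x) ∈ residual (Fin n → X))
    (A B : Set X)
    (hA : ¬ IsMeagre A)
    (hB : ∀ U : Set X, IsOpen U → U.Nonempty → ¬ IsMeagre (B ∩ U))
    {n : ℕ} (x : Fin n → X) (hx : x ∈ generics D a n)
    (V : Set G) (hV : V ∈ nhds (1 : G))
    (ε : ℝ) (hε : 0 < ε) :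
    ∃ y₀ ∈ A, ∃ y₁ ∈ B, ∃ h ∈ V,
      Fin.snoc x y₀ ∈ generics D a (n + 1) ∧
      Fin.snoc x y₁ ∈ generics D a (n + 1) ∧
      supMet D (fun i => a h ((Fin.snoc x y₀ : Fin (n + 1) → X) i)) (Fin.snoc x y₁) < ε := by
  have hD : IsPseudoMetricFn D := ⟨fun x => (hD_eq x x).2 rfl, hD_symm, hD_tri⟩
  have ha : IsIsometricAction D a := ⟨ha_one, ha_mul, ha_iso⟩
  set δ := ε / 5 with hδε
  have hδ : 0 < δ := by positivity
  obtain ⟨z, hz⟩ := hAG (n + 1) δ hδ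
  set R : Set (G × X) := {p | supMet D (fun j => a p.1 (z j)) (Fin.snoc x p.2) ≤ 2 * δ}
  have hR : IsClosed R := isClosed_setOf_supMet_le hD_lsc
    (continuous_pi fun j => ha_cont.comp (continuous_fst.prodMk continuous_const))
    (continuous_const.finSnoc continuous_snd) (by positivity)
  obtain ⟨y₀, ⟨hy₀A, hy₀gen, -⟩, y₁, ⟨hy₁B, hy₁gen, -⟩, v₀, v₁, hv, hv₀R, hv₁R⟩ :=
    exists_mul_inv_mem_of_isClosed hR (ha.eventually_residual_snoc_mem_generics_inter_encl hD
      ha_cont (hAG (n + 1)) hδ hz hx) (fun y ⟨_, _, ⟨g, hg⟩, hyg⟩ =>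
        ⟨g, by simpa only [R, mem_ofPred_eq, funext hg, hD.supMet_comm] using hyg.le⟩) hA hB hV
  refine ⟨y₀, hy₀A, y₁, hy₁B, v₁ * v₀⁻¹, hv, hy₀gen, hy₁gen, ?_⟩
  calc _ ≤ supMet D (fun j => a (v₁ * v₀⁻¹) ((Fin.snoc x y₀ : Fin (n + 1) → X) j))
          (fun j => a v₁ (z j)) + supMet D (fun j => a v₁ (z j)) (Fin.snoc x y₁) :=
        hD.supMet_triangle _ _ _
    _ ≤ 2 * δ + 2 * δ := by
        rw [ha.supMet_act_mul_inv, hD.supMet_comm]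
        exact add_le_add hv₀R hv₁R
    _ < ε := by linarith

/-- Extension lemma for topometric actions with ample generics: given `A`
non-meagre, `B` non-meagre in every non-empty open set, a generic tuple `x`, a
neighbourhood `V` of the identity and `ε > 0`, there are `y₀ ∈ A`, `y₁ ∈ B`, `h ∈ V` with
`(x,y₀)`, `(x,y₁)` generic and `D(h·(x,y₀), (x,y₁)) < ε`. -/
theorem stmt_7
    {G X : Type*} [Group G] [TopologicalSpace G] [IsTopologicalGroup G] [PolishSpace G]
    [TopologicalSpace X] [PolishSpace X]
    (D : X → X → ℝ)
    (hD_eq : ∀ x y : X, D x y = 0 ↔ x = y)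
    (hD_symm : ∀ x y : X, D x y = D y x)
    (hD_tri : ∀ x y z : X, D x z ≤ D x y + D y z)
    (hD_ref : ∀ U : Set X, IsOpen U → ∀ x ∈ U, ∃ ε > (0 : ℝ), {y | D x y < ε} ⊆ U)
    (hD_lsc : ∀ r : ℝ, IsClosed {p : X × X | D p.1 p.2 ≤ r})
    (a : G → X → X)
    (ha_one : ∀ x : X, a 1 x = x)
    (ha_mul : ∀ g h : G, ∀ x : X, a (g * h) x = a g (a h x))
    (ha_cont : Continuous fun p : G × X => a p.1 p.2)
    (ha_iso : ∀ g : G, ∀ x y : X, D (a g x) (a g y) = D x y)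
    (hAG : ∀ n : ℕ, ∀ ε > (0 : ℝ), ∃ x : Fin n → X,
      encl D ε (orbitTup a x) ∈ residual (Fin n → X))
    (A B : Set X)
    (hA : ¬ IsMeagre A)
    (hB : ∀ U : Set X, IsOpen U → U.Nonempty → ¬ IsMeagre (B ∩ U))
    {n : ℕ} (x : Fin n → X) (hx : x ∈ generics D a n)
    (V : Set G) (hV : V ∈ nhds (1 : G)) (hVopen : IsOpen V)
    (ε : ℝ) (hε : 0 < ε) :
    ∃ y₀ ∈ A, ∃ y₁ ∈ B, ∃ h ∈ V,
      Fin.snoc x y₀ ∈ generics D a (n + 1) ∧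
      Fin.snoc x y₁ ∈ generics D a (n + 1) ∧
      supMet D (fun i => a h ((Fin.snoc x y₀ : Fin (n + 1) → X) i)) (Fin.snoc x y₁) < ε :=
  stmt_7_general D hD_eq hD_symm hD_tri hD_lsc a ha_one ha_mul ha_cont ha_iso hAG A B hA hB x hx V
    hV ε hε
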